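/- arXiv:2403.04081 — 2 statements merged into one kernel-verified Lean document; each statement's English description precedes it below -/
import Mathlib

section
/- Let f : ℝ^d → ℝ be convex and continuously differentiable, and let x ∈ ℝ^d. Then either (i) f is minimized along the ray x(η) = x − η ∇f(x), i.e. inf_{η ≥ 0} f(x − η ∇f(x)) = inf_{y ∈ ℝ^d} f(y), or (ii) there exists η > 0 such that η = 1/D(x, x − η ∇f(x)), that is, η = ‖ − η∇f(x)‖ / (2‖∇f(x − η∇f(x)) − ∇f(x)‖). -/
open scoped RealInnerProductSpace

/-- First-order characterization: a convex differentiable function lies above its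
tangent plane. -/
lemma convex_grad_ineq {d : ℕ} (f : EuclideanSpace ℝ (Fin d) → ℝ)
    (f' : EuclideanSpace ℝ (Fin d) → EuclideanSpace ℝ (Fin d))
    (hconv : ConvexOn ℝ Set.univ f)
    (hgrad : ∀ z, HasGradientAt f (f' z) z)
    (z y : EuclideanSpace ℝ (Fin d)) :
    f z + ⟪f' z, y - z⟫ ≤ f y := by
  set A : ℝ →ᵃ[ℝ] EuclideanSpace ℝ (Fin d) := AffineMap.lineMap z y with hA
  set g : ℝ → ℝ := f ∘ A with hg
  have hgconv : ConvexOn ℝ Set.univ g := by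
    have := hconv.comp_affineMap A
    simpa using this
  have hd : HasDerivAt g ⟪f' z, y - z⟫ 0 := by
    have h1 : HasDerivAt A (y - z) 0 := AffineMap.hasDerivAt_lineMap
    have h2 : HasFDerivAt f ((InnerProductSpace.toDual ℝ _) (f' z)) z :=
      (hgrad z).hasFDerivAt
    have h2' : HasFDerivAt f ((InnerProductSpace.toDual ℝ _) (f' z)) (A (0 : ℝ)) := by
      simpa [hA, AffineMap.lineMap_apply_zero] using h2
    have := h2'.comp_hasDerivAt 0 h1
    simpa [InnerProductSpace.toDual_apply_apply] using this
  have hslope := hgconv.le_slope_of_hasDerivAt (Set.mem_univ (0 : ℝ))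
    (Set.mem_univ (1 : ℝ)) one_pos hd
  have hs : slope g 0 1 = f y - f z := by
    simp [slope_def_field, hg, hA, Function.comp, AffineMap.lineMap_apply_zero,
      AffineMap.lineMap_apply_one]
  rw [hs] at hslope
  linarith

/-- **Existence of strongly adapted step-sizes for the point-wise smoothness**
(Proposition: existence-D).
If `f` is convex and continuously differentiable, then either (i) `f` is minimized along the ray
`x(η) = x - η ∇f(x)`, i.e. `inf_{η ≥ 0} f(x - η ∇f(x)) = inf_y f(y)`, or (ii) there exists
`η > 0` satisfying `η = 1/D(x, x - η ∇f(x))`, i.e.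
`η = ‖-(η ∇f(x))‖ / (2 ‖∇f(x - η ∇f(x)) - ∇f(x)‖)`. -/
theorem strongly_adapted_stepsize_exists_pointwise {d : ℕ}
    (f : EuclideanSpace ℝ (Fin d) → ℝ)
    (f' : EuclideanSpace ℝ (Fin d) → EuclideanSpace ℝ (Fin d))
    (hconv : ConvexOn ℝ Set.univ f)
    (hgrad : ∀ z, HasGradientAt f (f' z) z)
    (hcont : Continuous f')
    (x : EuclideanSpace ℝ (Fin d)) :
    sInf {r : ℝ | ∃ η : ℝ, 0 ≤ η ∧ r = f (x - η • f' x)} = sInf (Set.range f) ∨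
    ∃ η : ℝ, 0 < η ∧ η = ‖-(η • f' x)‖ / (2 * ‖f' (x - η • f' x) - f' x‖) := by
  by_cases hx0 : f' x = 0
  · -- x is a global minimizer
    left
    have hmin : ∀ y, f x ≤ f y := by
      intro y
      have := convex_grad_ineq f f' hconv hgrad x y
      rw [hx0] at this
      simpa using this
    have hS : {r : ℝ | ∃ η : ℝ, 0 ≤ η ∧ r = f (x - η • f' x)} = {f x} := by
      apply Set.eq_singleton_iff_unique_mem.mpr
      constructor
      · show ∃ η : ℝ, 0 ≤ η ∧ f x = f (x - η • f' x)
        exact ⟨0, le_refl 0, by simp⟩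
      rintro r ⟨η, _, rfl⟩
      simp [hx0]
    have hleast : IsLeast (Set.range f) (f x) := by
      constructor
      · exact ⟨x, rfl⟩
      · rintro r ⟨y, rfl⟩
        exact hmin y
    rw [hS, csInf_singleton, hleast.csInf_eq]
  · by_cases hc : ∃ η : ℝ, 0 < η ∧ ‖f' x‖ ≤ 2 * ‖f' (x - η • f' x) - f' x‖
    · -- intermediate value theorem gives a strongly adapted step size
      right
      obtain ⟨η₀, hη₀, hle⟩ := hc
      set h : ℝ → ℝ := fun η => 2 * ‖f' (x - η • f' x) - f' x‖ - ‖f' x‖ with hh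
      have hmap : Continuous fun η : ℝ => x - η • f' x :=
        continuous_const.sub (continuous_id.smul continuous_const)
      have hhc : ContinuousOn h (Set.Icc 0 η₀) := by
        apply Continuous.continuousOn
        exact (continuous_const.mul
          (((hcont.comp hmap).sub continuous_const).norm)).sub continuous_const
      have h0 : h 0 < 0 := by
        simp [hh, norm_pos_iff.mpr hx0]
      have hη₀' : 0 ≤ h η₀ := by simp only [hh]; linarith
      have : (0 : ℝ) ∈ Set.Icc (h 0) (h η₀) := ⟨le_of_lt h0, hη₀'⟩
      obtain ⟨c, hc1, hc2⟩ := intermediate_value_Icc (le_of_lt hη₀) hhc this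
      have hcpos : 0 < c := by
        rcases lt_or_eq_of_le hc1.1 with h' | h'
        · exact h'
        · exfalso; rw [← h'] at hc2; linarith
      refine ⟨c, hcpos, ?_⟩
      have hnorm : 2 * ‖f' (x - c • f' x) - f' x‖ = ‖f' x‖ := by
        simp only [hh] at hc2; linarith
      rw [norm_neg, norm_smul, hnorm, Real.norm_eq_abs, abs_of_pos hcpos,
        mul_div_assoc, div_self (norm_pos_iff.mpr hx0).ne', mul_one]
    · -- the gradient along the ray stays close to f' x, so f decreases linearly forever
      left
      push_neg at hc
      have key : ∀ η : ℝ, 0 < η → f (x - η • f' x) ≤ f x - η * (‖f' x‖ ^ 2 / 2) := by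
        intro η hη
        set y := x - η • f' x with hy
        have h1 := convex_grad_ineq f f' hconv hgrad y x
        have hxy : x - y = η • f' x := by simp [hy]
        have h2 : f y ≤ f x - ⟪f' y, x - y⟫ := by linarith
        rw [hxy, real_inner_smul_right] at h2
        have h3 : ⟪f' y, f' x⟫ = ‖f' x‖ ^ 2 + ⟪f' y - f' x, f' x⟫ := by
          rw [inner_sub_left, real_inner_self_eq_norm_sq]; ring
        have h4 : |⟪f' y - f' x, f' x⟫| ≤ ‖f' y - f' x‖ * ‖f' x‖ :=
          abs_real_inner_le_norm _ _
        have h5 : 2 * ‖f' y - f' x‖ < ‖f' x‖ := hc η hη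
        have h6 : ‖f' y - f' x‖ * ‖f' x‖ ≤ (‖f' x‖ / 2) * ‖f' x‖ := by
          apply mul_le_mul_of_nonneg_right _ (norm_nonneg _)
          linarith
        have h7 : ‖f' x‖ ^ 2 / 2 ≤ ⟪f' y, f' x⟫ := by
          rw [h3]
          nlinarith [abs_le.mp h4]
        have h8 : η * (‖f' x‖ ^ 2 / 2) ≤ η * ⟪f' y, f' x⟫ :=
          mul_le_mul_of_nonneg_left h7 (le_of_lt hη)
        linarith
      have hnotbdd : ¬ BddBelow {r : ℝ | ∃ η : ℝ, 0 ≤ η ∧ r = f (x - η • f' x)} := by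
        rintro ⟨b, hb⟩
        have hpos : 0 < ‖f' x‖ ^ 2 / 2 := by
          have := norm_pos_iff.mpr hx0
          positivity
        have hbfx : b ≤ f x := hb ⟨0, le_refl 0, by simp⟩
        obtain ⟨η, hηdef⟩ : ∃ η : ℝ, η = (f x - b) / (‖f' x‖ ^ 2 / 2) + 1 := ⟨_, rfl⟩
        have hηpos : 0 < η := by
          have : 0 ≤ (f x - b) / (‖f' x‖ ^ 2 / 2) :=
            div_nonneg (by linarith) (le_of_lt hpos)
          linarith
        have hmem : f (x - η • f' x) ∈
            {r : ℝ | ∃ η : ℝ, 0 ≤ η ∧ r = f (x - η • f' x)} :=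
          ⟨η, le_of_lt hηpos, rfl⟩
        have hble := hb hmem
        have hkey := key η hηpos
        have hmul : η * (‖f' x‖ ^ 2 / 2) = (f x - b) + ‖f' x‖ ^ 2 / 2 := by
          rw [hηdef, add_mul, one_mul, div_mul_cancel₀ _ hpos.ne']
        nlinarith
      have hnotbdd2 : ¬ BddBelow (Set.range f) := by
        intro hbdd
        apply hnotbdd
        apply hbdd.mono
        rintro r ⟨η, _, rfl⟩
        exact ⟨_, rfl⟩
      rw [Real.sInf_of_not_bddBelow hnotbdd, Real.sInf_of_not_bddBelow hnotbdd2]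
end

section
/- Let f : ℝ^d → ℝ be convex and twice continuously differentiable, and let x ∈ ℝ^d. Then either (i) f is minimized along the ray x(η) = x − η ∇f(x), i.e. inf_{η ≥ 0} f(x − η ∇f(x)) = inf_{y ∈ ℝ^d} f(y), or (ii) there exists η > 0 such that η = 1/A(x, x − η ∇f(x)), where A is the path-wise directional smoothness. -/
open scoped RealInnerProductSpace
open Set

section Aux

lemma runningSup_bdd {r : ℝ → ℝ} (hr : Continuous r) (a b : ℝ) :
    BddAbove (r '' Set.Icc a b) :=
  (isCompact_Icc.image hr).bddAbove

lemma runningSup_mono {r : ℝ → ℝ} (hr : Continuous r) {a b : ℝ} (ha : 0 ≤ a) (hab : a ≤ b) :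
    sSup (r '' Set.Icc 0 a) ≤ sSup (r '' Set.Icc 0 b) :=
  csSup_le_csSup (runningSup_bdd hr 0 b) ((Set.nonempty_Icc.mpr ha).image r)
    (Set.image_mono (f := r) (Set.Icc_subset_Icc_right hab))

lemma runningSup_le_add {r : ℝ → ℝ} (hr : Continuous r) {c d ε2 : ℝ} (hc : 0 ≤ c) (hcd : c ≤ d)
    (hclose : ∀ s ∈ Set.Icc c d, |r s - r c| ≤ ε2) :
    sSup (r '' Set.Icc 0 d) ≤ sSup (r '' Set.Icc 0 c) + ε2 := by
  apply csSup_le ((Set.nonempty_Icc.mpr (hc.trans hcd)).image r)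
  rintro v ⟨s, hs, rfl⟩
  have hrc : r c ≤ sSup (r '' Set.Icc 0 c) :=
    le_csSup (runningSup_bdd hr 0 c) ⟨c, ⟨hc, le_refl c⟩, rfl⟩
  rcases le_or_gt s c with h | h
  · have : r s ≤ sSup (r '' Set.Icc 0 c) :=
      le_csSup (runningSup_bdd hr 0 c) ⟨s, ⟨hs.1, h⟩, rfl⟩
    have hε2 : 0 ≤ ε2 := (abs_nonneg _).trans (hclose c ⟨le_refl c, hcd⟩)
    linarith
  · have h1 := hclose s ⟨h.le, hs.2⟩
    have := abs_le.mp h1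
    linarith [this.1, this.2]

lemma runningSup_continuousOn {r : ℝ → ℝ} (hr : Continuous r) :
    ContinuousOn (fun η => sSup (r '' Set.Icc 0 η)) (Set.Ici 0) := by
  intro a ha
  rw [Metric.continuousWithinAt_iff]
  intro ε hε
  obtain ⟨δ, hδ, hδ'⟩ := Metric.continuousAt_iff.mp hr.continuousAt (ε/4) (by linarith)
  refine ⟨δ, hδ, ?_⟩
  intro b hb hbd
  simp only [Real.dist_eq] at hbd ⊢
  have ha0 : (0:ℝ) ≤ a := ha
  have hb0 : (0:ℝ) ≤ b := hb
  rcases le_total a b with hab | hab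
  · have hmono := runningSup_mono hr ha0 hab
    have hclose : ∀ s ∈ Set.Icc a b, |r s - r a| ≤ ε/2 := by
      intro s hs
      have : |s - a| < δ := by
        rw [abs_sub_lt_iff]; rw [abs_sub_lt_iff] at hbd
        constructor <;> linarith [hs.1, hs.2, hbd.1, hbd.2]
      have := hδ' (by simpa [Real.dist_eq] using this)
      rw [Real.dist_eq] at this
      linarith
    have := runningSup_le_add hr ha0 hab hclose
    rw [abs_sub_lt_iff]; constructor <;> linarith
  · have hmono := runningSup_mono hr hb0 hab
    have hclose : ∀ s ∈ Set.Icc b a, |r s - r b| ≤ ε/2 := by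
      intro s hs
      have hsa : |s - a| < δ := by
        rw [abs_sub_lt_iff]; rw [abs_sub_lt_iff] at hbd
        constructor <;> linarith [hs.1, hs.2, hbd.1, hbd.2]
      have h1 := hδ' (by simpa [Real.dist_eq] using hsa)
      have hba : |b - a| < δ := hbd
      have h2 := hδ' (by simpa [Real.dist_eq] using hba)
      rw [Real.dist_eq] at h1 h2
      calc |r s - r b| ≤ |r s - r a| + |r a - r b| := by
            have := abs_sub_le (r s) (r a) (r b); linarith
        _ ≤ ε/4 + ε/4 := by rw [abs_sub_comm (r a)]; linarith [h1.le, h2.le]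
        _ = ε/2 := by ring
    have := runningSup_le_add hr hb0 hab hclose
    rw [abs_sub_lt_iff]; constructor <;> linarith

/-- derivative of `t ↦ f (p + t • v)` when `f` has a gradient -/
lemma hasDerivAt_line {d : ℕ} {f : EuclideanSpace ℝ (Fin d) → ℝ}
    {f' : EuclideanSpace ℝ (Fin d) → EuclideanSpace ℝ (Fin d)}
    (hgrad : ∀ z, HasGradientAt f (f' z) z)
    (p v : EuclideanSpace ℝ (Fin d)) (t : ℝ) :
    HasDerivAt (fun s : ℝ => f (p + s • v)) ⟪f' (p + t • v), v⟫ t := by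
  have hline : HasDerivAt (fun s : ℝ => p + s • v) v t := by
    simpa using ((hasDerivAt_id t).smul_const v).const_add p
  have hF : HasFDerivAt f ((InnerProductSpace.toDual ℝ _) (f' (p + t • v))) (p + t • v) :=
    hgrad (p + t • v)
  have := hF.comp_hasDerivAt t hline
  simpa [InnerProductSpace.toDual_apply_apply, Function.comp_def] using this

lemma first_order {d : ℕ} {f : EuclideanSpace ℝ (Fin d) → ℝ}
    {f' : EuclideanSpace ℝ (Fin d) → EuclideanSpace ℝ (Fin d)}
    (hconv : ConvexOn ℝ Set.univ f)
    (hgrad : ∀ z, HasGradientAt f (f' z) z)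
    (y z : EuclideanSpace ℝ (Fin d)) :
    ⟪f' y, z - y⟫ ≤ f z - f y := by
  set u : ℝ → ℝ := fun t => f (y + t • (z - y)) with hu
  have hcu : ConvexOn ℝ Set.univ u := by
    have := hconv.comp_affineMap (AffineMap.lineMap y z)
    have heq : u = f ∘ (AffineMap.lineMap y z) := by
      funext t
      simp [hu, AffineMap.lineMap_apply, add_comm]
    rw [heq]
    simpa using this
  have hd : HasDerivAt u ⟪f' y, z - y⟫ 0 := by
    simpa using hasDerivAt_line hgrad y (z - y) 0
  have := hcu.le_slope_of_hasDerivAt (mem_univ (0:ℝ)) (mem_univ (1:ℝ)) one_pos hd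
  simpa [slope_def_field, hu] using this

lemma grad_mono {d : ℕ} {f : EuclideanSpace ℝ (Fin d) → ℝ}
    {f' : EuclideanSpace ℝ (Fin d) → EuclideanSpace ℝ (Fin d)}
    (hconv : ConvexOn ℝ Set.univ f)
    (hgrad : ∀ z, HasGradientAt f (f' z) z)
    (y z : EuclideanSpace ℝ (Fin d)) :
    0 ≤ ⟪f' z - f' y, z - y⟫ := by
  have h1 := first_order hconv hgrad y z
  have h2 := first_order hconv hgrad z y
  have h3 : ⟪f' z, y - z⟫ = -⟪f' z, z - y⟫ := by
    rw [← inner_neg_right]; congr 1; abel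
  rw [inner_sub_left]
  rw [h3] at h2
  linarith

lemma f'_contDiff {d : ℕ} {f : EuclideanSpace ℝ (Fin d) → ℝ}
    {f' : EuclideanSpace ℝ (Fin d) → EuclideanSpace ℝ (Fin d)}
    (hf : ContDiff ℝ 2 f)
    (hgrad : ∀ z, HasGradientAt f (f' z) z) :
    ContDiff ℝ 1 f' := by
  have hfe : f' = fun z => (InnerProductSpace.toDual ℝ _).symm (fderiv ℝ f z) := by
    funext z
    have h1 : HasFDerivAt f ((InnerProductSpace.toDual ℝ _) (f' z)) z := hgrad z
    rw [h1.fderiv]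
    simp
  rw [hfe]
  exact ((InnerProductSpace.toDual ℝ _).symm.contDiff).comp (hf.fderiv_right (by norm_num))

end Aux

/-- **Existence of strongly adapted step-sizes for the path-wise smoothness**
(Proposition: existence-A).
If `f` is convex and twice continuously differentiable, then either (i) `f` is minimized along
the ray `x(η) = x - η ∇f(x)`, i.e. `inf_{η ≥ 0} f(x - η ∇f(x)) = inf_y f(y)`, or (ii) there
exists `η > 0` satisfying `η = 1/A(x, x - η ∇f(x))`, where
`A(x,y) = sup_{t ∈ (0,1]} ⟪∇f(x + t(y-x)) - ∇f x, y - x⟫ / (t ‖y - x‖²)`. -/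
theorem strongly_adapted_stepsize_exists_pathwise {d : ℕ}
    (f : EuclideanSpace ℝ (Fin d) → ℝ)
    (f' : EuclideanSpace ℝ (Fin d) → EuclideanSpace ℝ (Fin d))
    (hconv : ConvexOn ℝ Set.univ f)
    (hf : ContDiff ℝ 2 f)
    (hgrad : ∀ z, HasGradientAt f (f' z) z)
    (x : EuclideanSpace ℝ (Fin d)) :
    sInf {r : ℝ | ∃ η : ℝ, 0 ≤ η ∧ r = f (x - η • f' x)} = sInf (Set.range f) ∨
    ∃ η : ℝ, 0 < η ∧
      η = 1 / sSup {r : ℝ | ∃ t ∈ Set.Ioc (0:ℝ) 1,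
        r = ⟪f' (x + t • (x - η • f' x - x)) - f' x, x - η • f' x - x⟫ /
          (t * ‖x - η • f' x - x‖ ^ 2)} := by
  by_cases hg : f' x = 0
  · -- the gradient vanishes: `x` is a global minimizer and the ray is constant
    left
    have hset : {r : ℝ | ∃ η : ℝ, 0 ≤ η ∧ r = f (x - η • f' x)} = {f x} := by
      ext v
      simp only [hg, smul_zero, sub_zero, mem_setOf_eq, mem_singleton_iff]
      exact ⟨fun ⟨η, _, h⟩ => h, fun h => ⟨0, le_refl 0, h⟩⟩
    have hlb : ∀ v ∈ Set.range f, f x ≤ v := by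
      rintro v ⟨z, rfl⟩
      have := first_order hconv hgrad x z
      simp [hg] at this
      linarith
    rw [hset, csInf_singleton]
    exact le_antisymm (le_csInf ⟨f x, x, rfl⟩ hlb) (csInf_le ⟨f x, hlb⟩ ⟨x, rfl⟩)
  · -- nonzero gradient
    set g := f' x with hgdef
    have hn2 : (0:ℝ) < ‖g‖ ^ 2 := pow_pos (norm_pos_iff.mpr hg) 2
    set n2 := ‖g‖ ^ 2 with hn2def
    set q : ℝ → ℝ := fun s => ⟪f' x - f' (x - s • g), g⟫ with hqdef
    have hq0 : q 0 = 0 := by simp [hqdef]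
    have hf'c := f'_contDiff hf hgrad
    have hqdiff : Differentiable ℝ q := by
      have hcurve : Differentiable ℝ (fun s : ℝ => x - s • g) :=
        (differentiable_const x).sub (differentiable_id.smul_const g)
      exact (Differentiable.const_sub ((hf'c.differentiable one_ne_zero).comp hcurve) (f' x)).inner ℝ
        (differentiable_const g)
    have hqc : Continuous q := hqdiff.continuous
    set D : ℝ := deriv q 0 with hDdef
    set r : ℝ → ℝ := fun s => if s = 0 then D / n2 else q s / (s * n2) with hrdef
    have hrc : Continuous r := by
      rw [continuous_iff_continuousAt]
      intro a
      by_cases ha : a = 0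
      · subst ha
        have hsl : Filter.Tendsto (slope q 0) (nhdsWithin 0 {(0:ℝ)}ᶜ) (nhds D) :=
          hasDerivAt_iff_tendsto_slope.mp (hqdiff 0).hasDerivAt
        have h2 : Filter.Tendsto r (nhdsWithin 0 {(0:ℝ)}ᶜ) (nhds (r 0)) := by
          have hr00 : r 0 = D / n2 := if_pos rfl
          rw [hr00]
          apply Filter.Tendsto.congr' _ (hsl.div_const n2)
          filter_upwards [self_mem_nhdsWithin] with s hs
          simp only [mem_compl_iff, mem_singleton_iff] at hs
          rw [hrdef]
          simp only [if_neg hs, slope_def_field, hq0, sub_zero, div_div]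
        rw [ContinuousAt, ← nhdsNE_sup_pure 0]
        rw [Filter.tendsto_sup]
        exact ⟨h2, tendsto_pure_nhds r 0⟩
      · have hcont : ContinuousAt (fun s => q s / (s * n2)) a := by
          apply ContinuousAt.div hqc.continuousAt
            ((continuous_id.mul continuous_const).continuousAt)
          simp [ha, ne_of_gt hn2, hg]
        apply hcont.congr
        filter_upwards [eventually_ne_nhds ha] with s hs
        rw [hrdef]; simp [hs]
    set R : ℝ → ℝ := fun η => sSup (r '' Icc 0 η) with hRdef
    set F : ℝ → ℝ := fun η => η * R η with hFdef
    have hFc : ContinuousOn F (Ici 0) :=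
      (continuous_id.continuousOn).mul (runningSup_continuousOn hrc)
    have hF0 : F 0 = 0 := zero_mul _
    -- key pointwise identity for the elements of the sSup set
    have hexpr : ∀ η : ℝ, 0 < η → ∀ t ∈ Set.Ioc (0:ℝ) 1,
        ⟪f' (x + t • (x - η • f' x - x)) - f' x, x - η • f' x - x⟫ /
          (t * ‖x - η • f' x - x‖ ^ 2) = r (t * η) := by
      intro η hη t ht
      have hw : x - η • f' x - x = -(η • g) := by
        rw [← hgdef, sub_sub_cancel_left]
      rw [hw]
      have hpoint : x + t • -(η • g) = x - (t * η) • g := by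
        rw [smul_neg, smul_smul, ← sub_eq_add_neg]
      rw [hpoint]
      have hne : t * η ≠ 0 := ne_of_gt (mul_pos ht.1 hη)
      have h1 : ⟪f' (x - (t * η) • g) - f' x, -(η • g)⟫ = η * q (t * η) := by
        rw [hqdef]
        simp only [inner_neg_right, real_inner_smul_right, inner_sub_left]
        ring
      have h2 : ‖-(η • g)‖ ^ 2 = η ^ 2 * n2 := by
        rw [norm_neg, norm_smul, mul_pow, hn2def, Real.norm_eq_abs, sq_abs]
      rw [h1, h2, hrdef]
      simp only [if_neg hne]
      have hp1 : (0:ℝ) < t * (η ^ 2 * n2) := mul_pos ht.1 (mul_pos (pow_pos hη 2) hn2)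
      have hp2 : (0:ℝ) < t * η * n2 := mul_pos (mul_pos ht.1 hη) hn2
      rw [div_eq_div_iff hp1.ne' hp2.ne']
      ring
    by_cases hcase : ∃ η₀ : ℝ, 0 < η₀ ∧ 1 ≤ F η₀
    · -- crossing case: intermediate value theorem produces a strongly adapted step size
      obtain ⟨η₀, hη₀, hF₀⟩ := hcase
      have hIVT := intermediate_value_Icc hη₀.le (hFc.mono Icc_subset_Ici_self)
      have h1mem : (1:ℝ) ∈ Icc (F 0) (F η₀) := ⟨by rw [hF0]; norm_num, hF₀⟩
      obtain ⟨η, hηmem, hFη⟩ := hIVT h1mem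
      have hηpos : 0 < η := by
        rcases eq_or_lt_of_le hηmem.1 with h0 | h0
        · exfalso; rw [← h0, hF0] at hFη; norm_num at hFη
        · exact h0
      right
      refine ⟨η, hηpos, ?_⟩
      have hset : {v : ℝ | ∃ t ∈ Set.Ioc (0:ℝ) 1,
          v = ⟪f' (x + t • (x - η • f' x - x)) - f' x, x - η • f' x - x⟫ /
            (t * ‖x - η • f' x - x‖ ^ 2)} = r '' Ioc 0 η := by
        ext v
        simp only [mem_setOf_eq, mem_image]
        constructor
        · rintro ⟨t, ht, rfl⟩
          refine ⟨t * η, ⟨mul_pos ht.1 hηpos, ?_⟩, (hexpr η hηpos t ht).symm⟩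
          calc t * η ≤ 1 * η := mul_le_mul_of_nonneg_right ht.2 hηpos.le
            _ = η := one_mul η
        · rintro ⟨s, hs, rfl⟩
          have hts : s / η ∈ Set.Ioc (0:ℝ) 1 :=
            ⟨div_pos hs.1 hηpos, (div_le_one hηpos).mpr hs.2⟩
          refine ⟨s / η, hts, ?_⟩
          rw [hexpr η hηpos (s / η) hts, div_mul_cancel₀ _ (ne_of_gt hηpos)]
      rw [hset]
      have hbddIoc : BddAbove (r '' Ioc 0 η) :=
        (runningSup_bdd hrc 0 η).mono (image_mono (f := r) Ioc_subset_Icc_self)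
      have hsup : sSup (r '' Ioc 0 η) = R η := by
        apply le_antisymm
        · exact csSup_le_csSup (runningSup_bdd hrc 0 η) ((nonempty_Ioc.mpr hηpos).image r)
            (image_mono (f := r) Ioc_subset_Icc_self)
        · apply csSup_le ((nonempty_Icc.mpr hηpos.le).image r)
          rintro v ⟨s, hs, rfl⟩
          rcases eq_or_lt_of_le hs.1 with h0 | h0
          · rw [← h0]
            have htend : Filter.Tendsto r (nhdsWithin 0 (Ioi 0)) (nhds (r 0)) :=
              (hrc.continuousAt.tendsto).mono_left nhdsWithin_le_nhds
            apply le_of_tendsto htend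
            filter_upwards [Ioc_mem_nhdsGT_of_mem ⟨le_refl (0:ℝ), hηpos⟩] with u hu
            exact le_csSup hbddIoc ⟨u, hu, rfl⟩
          · exact le_csSup hbddIoc ⟨s, ⟨h0, hs.2⟩, rfl⟩
      rw [hsup]
      have hmul : η * R η = 1 := hFη
      have hRη : R η = 1 / η := by
        field_simp
        linarith [hmul]
      rw [hRη]
      field_simp
    · -- no crossing: the function decreases linearly along the ray, both infima are `0`
      push_neg at hcase
      left
      have hq_eq : ∀ s : ℝ, 0 ≤ s → ⟪f' (x - s • g), g⟫ = n2 := by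
        intro s hs
        rcases eq_or_lt_of_le hs with h0 | h0
        · rw [← h0, zero_smul, sub_zero, ← hgdef, real_inner_self_eq_norm_sq]
        · have hq_nonneg : 0 ≤ q s := by
            have hmono := grad_mono hconv hgrad (x - s • g) x
            have hxy : x - (x - s • g) = s • g := sub_sub_cancel x (s • g)
            rw [hxy, real_inner_smul_right] at hmono
            rw [hqdef]
            nlinarith
          have hr_nonpos : r s ≤ 0 := by
            by_contra hpos
            push_neg at hpos
            set η₁ := max s (2 / r s) with hη₁def
            have hη₁s : s ≤ η₁ := le_max_left _ _
            have hη₁pos : 0 < η₁ := lt_of_lt_of_le h0 hη₁s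
            have h2 : 2 / r s ≤ η₁ := le_max_right _ _
            have hrs_le : r s ≤ R η₁ :=
              le_csSup (runningSup_bdd hrc 0 η₁) ⟨s, ⟨hs, hη₁s⟩, rfl⟩
            have hFlt : η₁ * R η₁ < 1 := hcase η₁ hη₁pos
            have h3 : 2 ≤ η₁ * r s := by
              rw [div_le_iff₀ hpos] at h2
              linarith
            nlinarith [mul_le_mul_of_nonneg_left hrs_le hη₁pos.le]
          have hrs : r s = q s / (s * n2) := if_neg (ne_of_gt h0)
          have hsn : 0 < s * n2 := mul_pos h0 hn2
          have hq0' : q s = 0 := by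
            rw [hrs] at hr_nonpos
            have h := mul_le_mul_of_nonneg_right hr_nonpos hsn.le
            rw [div_mul_cancel₀ _ (ne_of_gt hsn), zero_mul] at h
            linarith
          have hinner : ⟪f' x - f' (x - s • g), g⟫ = (0:ℝ) := hq0'
          rw [inner_sub_left] at hinner
          have hgg : ⟪f' x, g⟫ = n2 := by
            rw [← hgdef, hn2def, real_inner_self_eq_norm_sq]
          linarith
      have hlin : ∀ b : ℝ, 0 ≤ b → f (x - b • g) = f x - b * n2 := by
        intro b hb
        rcases eq_or_lt_of_le hb with h0 | h0
        · rw [← h0]; simp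
        · set c : ℝ → ℝ := fun η => f (x - η • g) + η * n2 with hcdef
          have hcont : ContinuousOn c (Icc 0 b) := by
            apply Continuous.continuousOn
            exact ((hf.continuous).comp
              ((continuous_const).sub (continuous_id.smul continuous_const))).add
              (continuous_id.mul continuous_const)
          have hder : ∀ y ∈ Ico (0:ℝ) b, HasDerivWithinAt c 0 (Ici y) y := by
            intro y hy
            have h1 : HasDerivAt (fun η : ℝ => f (x - η • g)) (-n2) y := by
              have hll := hasDerivAt_line hgrad x (-g) y
              have heq : (fun s : ℝ => f (x + s • (-g))) = fun s : ℝ => f (x - s • g) := by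
                funext s; rw [smul_neg, ← sub_eq_add_neg]
              rw [heq] at hll
              have hval : ⟪f' (x + y • (-g)), -g⟫ = -n2 := by
                rw [smul_neg, ← sub_eq_add_neg, inner_neg_right, hq_eq y hy.1]
              rwa [hval] at hll
            have h2 : HasDerivAt c 0 y := by
              have := h1.add ((hasDerivAt_id y).mul_const n2)
              simpa [hcdef, Pi.add_def] using this
            exact h2.hasDerivWithinAt
          have hconst := constant_of_has_deriv_right_zero hcont hder b (right_mem_Icc.mpr hb)
          rw [hcdef] at hconst
          simp only [zero_smul, sub_zero, zero_mul, add_zero] at hconst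
          linarith [hconst]
      have hray_unbdd : ¬ BddBelow {v : ℝ | ∃ η : ℝ, 0 ≤ η ∧ v = f (x - η • f' x)} := by
        rintro ⟨m, hm⟩
        set b := max 0 ((f x - m + 1) / n2) with hbdef
        have hb0 : (0:ℝ) ≤ b := le_max_left _ _
        have hmem : f x - b * n2 ∈ {v : ℝ | ∃ η : ℝ, 0 ≤ η ∧ v = f (x - η • f' x)} :=
          ⟨b, hb0, by rw [← hgdef, hlin b hb0]⟩
        have hm' := hm hmem
        have hb2 : (f x - m + 1) / n2 ≤ b := le_max_right _ _
        rw [div_le_iff₀ hn2] at hb2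
        nlinarith
      have hrange_unbdd : ¬ BddBelow (Set.range f) := by
        intro h
        apply hray_unbdd
        apply h.mono
        rintro v ⟨η, _, rfl⟩
        exact ⟨_, rfl⟩
      rw [csInf_of_not_bddBelow hray_unbdd, csInf_of_not_bddBelow hrange_unbdd]
end
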